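/- arXiv:1101.3683 — 7 statements merged into one kernel-verified Lean document; each statement's English description precedes it below -/
import Mathlib

section
/- Let A and B be 2×2 matrices over 𝒪 with nonzero determinant. Then U A U = U B U if and only if δ₁(A) = δ₁(B) and δ₂(A) = δ₂(B). -/
open Matrix

/-- The double coset `U A U` with respect to the unimodular group
`U = GL₂(𝒪)` (matrices over `𝒪` whose determinant is a unit). -/
def doubleCoset' {O : Type*} [CommRing O] (A : Matrix (Fin 2) (Fin 2) O) :
    Set (Matrix (Fin 2) (Fin 2) O) :=
  {X | ∃ P Q : Matrix (Fin 2) (Fin 2) O, IsUnit P.det ∧ IsUnit Q.det ∧ X = P * A * Q}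

/-- The first determinantal divisor `δ₁(A)`. -/
def delta1 {O : Type*} [CommRing O] (A : Matrix (Fin 2) (Fin 2) O) : Ideal O :=
  Ideal.span {A 0 0, A 0 1, A 1 0, A 1 1}

/-- The second determinantal divisor `δ₂(A) = (det A)𝒪`. -/
def delta2 {O : Type*} [CommRing O] (A : Matrix (Fin 2) (Fin 2) O) : Ideal O :=
  Ideal.span {A.det}

/-!
Multiplying by unimodular matrices changes neither the ideal of the entries nor the determinant up
to a unit, which gives one direction. Conversely, let `I = δ₁(A)` and `(d) = δ₂(A)`. At each of the
finitely many primes `𝔭 ∣ d` we have `I ≠ 𝔭 I`, so some shear of `A` has its corner outside `𝔭 I`;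
gluing these shears by the Chinese remainder theorem gives an equivalent matrix whose corner `a`
satisfies `(a) + I d = I`, and clearing the off-diagonal entries against `a` makes them divisible
by `d`. For two such reduced matrices `A`, `B` with the same `I` and `d` and corners `a`, `a'`,
write `(a) = I J` and `(a') = I J'` with `J`, `J'` coprime to `d`, and pick `Q ∈ SL₂(𝒪)` with
`Q₀₀ ∈ J`, `Q₁₁ ∈ J'` and off-diagonal entries divisible by `d`. Modulo `d` the product
`B Q adj(A)` is diagonal with entries `a' Q₀₀ A₁₁` and `B₁₁ Q₁₁ a`, and these vanish because
`a' Q₀₀ ∈ I J = (a)` and `a A₁₁ ≡ det A ≡ 0`. Hence `B Q = P A` with `P` integral of unit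
determinant.
-/

section CommRing

variable {O : Type*} [CommRing O]

theorem mem_doubleCoset'_self (A : Matrix (Fin 2) (Fin 2) O) : A ∈ doubleCoset' A :=
  ⟨1, 1, by simp, by simp, by simp⟩

theorem mem_doubleCoset'_trans {A B C : Matrix (Fin 2) (Fin 2) O} (hB : B ∈ doubleCoset' A)
    (hC : C ∈ doubleCoset' B) : C ∈ doubleCoset' A := by
  obtain ⟨P, Q, hP, hQ, rfl⟩ := hB
  obtain ⟨P', Q', hP', hQ', rfl⟩ := hC
  refine ⟨P' * P, Q * Q', ?_, ?_, by simp only [mul_assoc]⟩ <;>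
    rw [det_mul] <;> exact IsUnit.mul ‹_› ‹_›

theorem mem_doubleCoset'_symm {A B : Matrix (Fin 2) (Fin 2) O} (hB : B ∈ doubleCoset' A) :
    A ∈ doubleCoset' B := by
  obtain ⟨P, Q, hP, hQ, rfl⟩ := hB
  refine ⟨P⁻¹, Q⁻¹, isUnit_nonsing_inv_det P hP, isUnit_nonsing_inv_det Q hQ, ?_⟩
  simp only [mul_assoc, mul_nonsing_inv Q hQ, mul_one,
    nonsing_inv_mul_cancel_left P A hP]

theorem doubleCoset'_eq_iff_mem {A B : Matrix (Fin 2) (Fin 2) O} :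
    doubleCoset' A = doubleCoset' B ↔ B ∈ doubleCoset' A := by
  refine ⟨fun h => h ▸ mem_doubleCoset'_self B, fun hB => Set.ext fun C => ?_⟩
  exact ⟨fun hC => mem_doubleCoset'_trans (mem_doubleCoset'_symm hB) hC,
    fun hC => mem_doubleCoset'_trans hB hC⟩

theorem delta1_le_iff {A : Matrix (Fin 2) (Fin 2) O} {N : Ideal O} :
    delta1 A ≤ N ↔ ∀ i j, A i j ∈ N := by
  simp only [delta1, Ideal.span_le, Set.insert_subset_iff, Set.singleton_subset_iff,
    SetLike.mem_coe, Fin.forall_fin_two]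
  tauto

theorem entry_mem_delta1 (A : Matrix (Fin 2) (Fin 2) O) (i j : Fin 2) : A i j ∈ delta1 A :=
  delta1_le_iff.mp le_rfl i j

theorem delta1_mul_le_left (P A : Matrix (Fin 2) (Fin 2) O) : delta1 (P * A) ≤ delta1 A :=
  delta1_le_iff.mpr fun i j => by
    rw [mul_apply]
    exact Ideal.sum_mem _ fun k _ => Ideal.mul_mem_left _ _ (entry_mem_delta1 A k j)

theorem delta1_mul_le_right (A Q : Matrix (Fin 2) (Fin 2) O) : delta1 (A * Q) ≤ delta1 A :=
  delta1_le_iff.mpr fun i j => by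
    rw [mul_apply]
    exact Ideal.sum_mem _ fun k _ => Ideal.mul_mem_right _ _ (entry_mem_delta1 A i k)

theorem delta1_le_of_mem_doubleCoset' {A B : Matrix (Fin 2) (Fin 2) O}
    (hB : B ∈ doubleCoset' A) : delta1 B ≤ delta1 A := by
  obtain ⟨P, Q, -, -, rfl⟩ := hB
  exact (delta1_mul_le_right _ Q).trans (delta1_mul_le_left P A)

theorem delta1_eq_of_mem_doubleCoset' {A B : Matrix (Fin 2) (Fin 2) O}
    (hB : B ∈ doubleCoset' A) : delta1 B = delta1 A :=
  le_antisymm (delta1_le_of_mem_doubleCoset' hB)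
    (delta1_le_of_mem_doubleCoset' (mem_doubleCoset'_symm hB))

theorem delta2_eq_of_mem_doubleCoset' {A B : Matrix (Fin 2) (Fin 2) O}
    (hB : B ∈ doubleCoset' A) : delta2 B = delta2 A := by
  obtain ⟨P, Q, hP, hQ, rfl⟩ := hB
  rw [delta2, delta2, det_mul, det_mul, Ideal.span_singleton_mul_right_unit hQ,
    Ideal.span_singleton_mul_left_unit hP]

theorem shear_mem_doubleCoset' (A : Matrix (Fin 2) (Fin 2) O) (x y : O) :
    !![1, x; 0, 1] * A * !![1, 0; y, 1] ∈ doubleCoset' A :=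
  ⟨_, _, by simp [det_fin_two_of], by simp [det_fin_two_of], rfl⟩

theorem shear_corner_eq (A : Matrix (Fin 2) (Fin 2) O) (x y : O) :
    (!![1, x; 0, 1] * A * !![1, 0; y, 1]) 0 0 = A 0 0 + x * A 1 0 + y * (A 0 1 + x * A 1 1) := by
  simp only [mul_apply, Fin.sum_univ_two, of_apply, cons_val', cons_val_zero, cons_val_one,
    cons_val_fin_one]
  ring

theorem shear_corner_sub_mem (A : Matrix (Fin 2) (Fin 2) O) {𝔭 : Ideal O} {x x' y y' : O}
    (hx : x - x' ∈ 𝔭) (hy : y - y' ∈ 𝔭) :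
    (!![1, x; 0, 1] * A * !![1, 0; y, 1]) 0 0 - (!![1, x'; 0, 1] * A * !![1, 0; y', 1]) 0 0 ∈
      𝔭 * delta1 A := by
  have hxy : x * y - x' * y' ∈ 𝔭 := by
    rw [show x * y - x' * y' = x * (y - y') + y' * (x - x') by ring]
    exact 𝔭.add_mem (𝔭.mul_mem_left _ hy) (𝔭.mul_mem_left _ hx)
  rw [shear_corner_eq, shear_corner_eq,
    show ∀ a b c d : O, a + x * b + y * (c + x * d) - (a + x' * b + y' * (c + x' * d)) =
      (x - x') * b + (y - y') * c + (x * y - x' * y') * d by intros; ring]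
  exact Ideal.add_mem _ (Ideal.add_mem _ (Ideal.mul_mem_mul hx (entry_mem_delta1 A 1 0))
    (Ideal.mul_mem_mul hy (entry_mem_delta1 A 0 1))) (Ideal.mul_mem_mul hxy (entry_mem_delta1 A 1 1))

theorem exists_shear_corner_notMem {A : Matrix (Fin 2) (Fin 2) O} {N : Ideal O}
    (h : ¬delta1 A ≤ N) : ∃ x y : O, (!![1, x; 0, 1] * A * !![1, 0; y, 1]) 0 0 ∉ N := by
  by_contra! hN
  simp only [shear_corner_eq] at hN
  refine h (delta1_le_iff.mpr ?_)
  have h00 := hN 0 0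
  have h10 := N.sub_mem (hN 1 0) (hN 0 0)
  have h01 := N.sub_mem (hN 0 1) (hN 0 0)
  have h11 := N.sub_mem (N.sub_mem (hN 1 1) (hN 1 0)) h01
  simp only [zero_mul, one_mul, add_zero, add_sub_cancel_left] at h00 h10 h01 h11
  simp only [Fin.forall_fin_two]
  exact ⟨⟨h00, h01⟩, h10, h11⟩

theorem exists_mem_doubleCoset'_offDiag_mem {A : Matrix (Fin 2) (Fin 2) O} {N : Ideal O}
    (h01 : A 0 1 ∈ Ideal.span {A 0 0} ⊔ N) (h10 : A 1 0 ∈ Ideal.span {A 0 0} ⊔ N) :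
    ∃ A' ∈ doubleCoset' A, A' 0 0 = A 0 0 ∧ A' 0 1 ∈ N ∧ A' 1 0 ∈ N := by
  obtain ⟨β, n, hn, hβ⟩ := Ideal.mem_span_singleton_sup.mp h01
  obtain ⟨γ, n', hn', hγ⟩ := Ideal.mem_span_singleton_sup.mp h10
  refine ⟨!![1, 0; -γ, 1] * A * !![1, -β; 0, 1],
    ⟨_, _, by simp [det_fin_two_of], by simp [det_fin_two_of], rfl⟩, ?_, ?_, ?_⟩
  · simp [mul_apply, Fin.sum_univ_two, vecMul, dotProduct]
  · convert hn using 1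
    simp only [mul_apply, Fin.sum_univ_two, of_apply, cons_val', cons_val_zero, cons_val_one,
      cons_val_fin_one]
    linear_combination -hβ
  · convert hn' using 1
    simp only [mul_apply, Fin.sum_univ_two, of_apply, cons_val', cons_val_zero, cons_val_one,
      cons_val_fin_one]
    linear_combination -hγ

theorem delta1_ne_bot {A : Matrix (Fin 2) (Fin 2) O} (hA : A.det ≠ 0) : delta1 A ≠ ⊥ := by
  intro h
  have h0 : ∀ i j, A i j = 0 := fun i j => by simpa [h] using entry_mem_delta1 A i j
  exact hA (by simp [det_fin_two, h0])

theorem delta2_ne_bot {A : Matrix (Fin 2) (Fin 2) O} (hA : A.det ≠ 0) : delta2 A ≠ ⊥ := by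
  simpa [delta2] using hA

theorem det_ne_zero_of_delta2_eq {A B : Matrix (Fin 2) (Fin 2) O} (hA : A.det ≠ 0)
    (h : delta2 A = delta2 B) : B.det ≠ 0 :=
  fun hB => delta2_ne_bot hA (by rw [h]; exact Ideal.span_singleton_eq_bot.mpr hB)

theorem exists_det_eq_one_offDiag_mem {J J' : Ideal O} {d : O} (hJ : J ⊔ Ideal.span {d} = ⊤)
    (hJ' : J' ⊔ Ideal.span {d} = ⊤) :
    ∃ Q : Matrix (Fin 2) (Fin 2) O, Q.det = 1 ∧ Q 0 0 ∈ J ∧ Q 1 1 ∈ J' ∧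
      Q 0 1 ∈ Ideal.span {d} ∧ Q 1 0 ∈ Ideal.span {d} := by
  have hone : ∀ {K : Ideal O}, K ⊔ Ideal.span {d} = ⊤ → ∃ q ∈ K, q - 1 ∈ Ideal.span {d} ^ 2 := by
    intro K hK
    obtain ⟨q, hq, n, hn, hqn⟩ := Submodule.mem_sup.mp
      ((Ideal.sup_pow_eq_top' hK (n := 2)).symm ▸ Submodule.mem_top : (1 : O) ∈ _)
    exact ⟨q, hq, by rw [← hqn, sub_add_cancel_left]; exact neg_mem hn⟩
  obtain ⟨q, hq, hq1⟩ := hone hJ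
  obtain ⟨t, ht, ht1⟩ := hone hJ'
  have hqt : q * t - 1 ∈ Ideal.span {d ^ 2} := by
    rw [← Ideal.span_singleton_pow, show q * t - 1 = (q - 1) * t + (t - 1) by ring]
    exact Ideal.add_mem _ (Ideal.mul_mem_right _ _ hq1) ht1
  obtain ⟨k, hk⟩ := Ideal.mem_span_singleton'.mp hqt
  refine ⟨!![q, d; k * d, t], ?_, hq, ht, Ideal.mem_span_singleton_self d,
    Ideal.mul_mem_left _ _ (Ideal.mem_span_singleton_self d)⟩
  simp only [det_fin_two_of]
  linear_combination -hk

structure IsReducedForm (A : Matrix (Fin 2) (Fin 2) O) : Prop where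
  zero_one_mem : A 0 1 ∈ delta2 A
  one_zero_mem : A 1 0 ∈ delta2 A
  span_sup_mul_eq : Ideal.span {A 0 0} ⊔ delta1 A * delta2 A = delta1 A

theorem IsReducedForm.diag_mul_mem {A : Matrix (Fin 2) (Fin 2) O} (hA : IsReducedForm A) :
    A 0 0 * A 1 1 ∈ delta2 A := by
  rw [show A 0 0 * A 1 1 = A.det + A 0 1 * A 1 0 by rw [det_fin_two]; ring]
  exact Ideal.add_mem _ (Ideal.mem_span_singleton_self _) (Ideal.mul_mem_right _ _ hA.zero_one_mem)

theorem IsReducedForm.mul_mul_entry_mem {A : Matrix (Fin 2) (Fin 2) O} (hA : IsReducedForm A)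
    {J : Ideal O} (hJ : Ideal.span {A 0 0} = delta1 A * J) {x q : O} (hx : x ∈ delta1 A)
    (hq : q ∈ J) : x * q * A 1 1 ∈ delta2 A := by
  obtain ⟨k, hk⟩ := Ideal.mem_span_singleton'.mp (hJ ▸ Ideal.mul_mem_mul hx hq)
  rw [← hk, mul_assoc]
  exact Ideal.mul_mem_left _ _ hA.diag_mul_mem

end CommRing

theorem Matrix.exists_eq_mul_of_det_dvd_mul_adjugate {n R : Type*} [Fintype n] [DecidableEq n]
    [CommRing R] [IsDomain R] {A X : Matrix n n R} (hA : A.det ≠ 0)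
    (h : ∀ i j, A.det ∣ (X * A.adjugate) i j) : ∃ P, X = P * A := by
  choose P hP using h
  refine ⟨of P, smul_right_injective _ hA ?_⟩
  calc A.det • X = X * (A.adjugate * A) := by rw [adjugate_mul, Matrix.mul_smul, mul_one]
    _ = A.det • of P * A := by rw [← mul_assoc]; congr 1; ext i j; exact hP i j
    _ = A.det • (of P * A) := smul_mul_assoc _ _ _

section Domain

variable {O : Type*} [CommRing O] [IsDomain O]

theorem mem_doubleCoset'_of_det_dvd_mul_adjugate {A B Q : Matrix (Fin 2) (Fin 2) O}
    (hA : A.det ≠ 0) (hAB : delta2 A = delta2 B) (hQ : IsUnit Q.det)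
    (h : ∀ i j, A.det ∣ (B * Q * A.adjugate) i j) : B ∈ doubleCoset' A := by
  obtain ⟨P, hP⟩ := Matrix.exists_eq_mul_of_det_dvd_mul_adjugate hA h
  obtain ⟨u, hu⟩ := Ideal.span_singleton_eq_span_singleton.mp hAB
  have hPdet : P.det = u * Q.det := by
    apply mul_right_cancel₀ hA
    rw [← det_mul, ← hP, det_mul, ← hu]
    ring
  refine ⟨P, Q⁻¹, hPdet ▸ u.isUnit.mul hQ, isUnit_nonsing_inv_det Q hQ, ?_⟩
  rw [← hP, mul_assoc, mul_nonsing_inv Q hQ, mul_one]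

end Domain

section Dedekind

variable {O : Type*} [CommRing O] [IsDedekindDomain O]

theorem Ideal.not_le_mul_self_of_ne_top {M 𝔭 : Ideal O} (hM : M ≠ ⊥) (h𝔭 : 𝔭 ≠ ⊤) :
    ¬M ≤ 𝔭 * M := by
  intro h
  refine h𝔭 (mul_left_cancel₀ hM ?_)
  rw [Ideal.mul_top, mul_comm]
  exact le_antisymm Ideal.mul_le_right h

theorem Ideal.span_singleton_sup_mul_eq_of_forall_notMem {M Y : Ideal O} {r : O} (hM : M ≠ ⊥)
    (hr : r ∈ M) (h : ∀ 𝔭 : Ideal O, 𝔭.IsMaximal → Y ≤ 𝔭 → r ∉ 𝔭 * M) :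
    Ideal.span {r} ⊔ M * Y = M := by
  obtain ⟨C, hC⟩ := Ideal.dvd_iff_le.mpr
    (sup_le ((Ideal.span_singleton_le_iff_mem _).mpr hr) Ideal.mul_le_left)
  by_cases hCtop : C = ⊤
  · rw [hC, hCtop, Ideal.mul_top]
  obtain ⟨𝔭, h𝔭, hC𝔭⟩ := Ideal.exists_le_maximal C hCtop
  have hYC : Y ≤ C :=
    Ideal.le_of_dvd ((mul_dvd_mul_iff_left hM).mp (Ideal.dvd_iff_le.mpr (hC ▸ le_sup_right)))
  refine absurd ?_ (h 𝔭 h𝔭 (hYC.trans hC𝔭))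
  rw [mul_comm]
  exact Ideal.mul_mono_right hC𝔭 (hC ▸ Ideal.mem_sup_left (Ideal.mem_span_singleton_self r))

theorem Ideal.exists_span_singleton_eq_mul_sup_eq_top {I D : Ideal O} {a : O} (hI : I ≠ ⊥)
    (h : Ideal.span {a} ⊔ I * D = I) : ∃ J, Ideal.span {a} = I * J ∧ J ⊔ D = ⊤ := by
  obtain ⟨J, hJ⟩ := Ideal.dvd_iff_le.mpr (h ▸ le_sup_left : Ideal.span {a} ≤ I)
  refine ⟨J, hJ, mul_left_cancel₀ hI ?_⟩
  rw [Ideal.mul_sup, ← hJ, h, Ideal.mul_top]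

open IsDedekindDomain in
theorem exists_mem_doubleCoset'_span_corner_sup_eq {A : Matrix (Fin 2) (Fin 2) O}
    (hA : A.det ≠ 0) :
    ∃ A' ∈ doubleCoset' A, Ideal.span {A' 0 0} ⊔ delta1 A' * delta2 A' = delta1 A' := by
  let ι := {v : HeightOneSpectrum O | v.asIdeal ∣ delta2 A}
  have : Finite ι := (Ideal.finite_factors (delta2_ne_bot hA)).to_subtype
  have hcop : Pairwise fun v w : ι => IsCoprime v.1.asIdeal w.1.asIdeal := fun v w hvw =>
    Ideal.isCoprime_of_isMaximal fun h => hvw (Subtype.ext (HeightOneSpectrum.ext h))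
  choose s t hst using fun v : ι => exists_shear_corner_notMem
    (Ideal.not_le_mul_self_of_ne_top (delta1_ne_bot hA) v.1.isMaximal.ne_top)
  obtain ⟨x, hx⟩ := Ideal.exists_forall_sub_mem_ideal hcop s
  obtain ⟨y, hy⟩ := Ideal.exists_forall_sub_mem_ideal hcop t
  have hmem := shear_mem_doubleCoset' A x y
  refine ⟨_, hmem, ?_⟩
  rw [delta1_eq_of_mem_doubleCoset' hmem, delta2_eq_of_mem_doubleCoset' hmem]
  refine Ideal.span_singleton_sup_mul_eq_of_forall_notMem (delta1_ne_bot hA)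
    (delta1_le_of_mem_doubleCoset' hmem (entry_mem_delta1 _ 0 0)) fun 𝔭 h𝔭 hle hcorner => ?_
  have h𝔭bot : 𝔭 ≠ ⊥ := fun h => delta2_ne_bot hA (le_bot_iff.mp (h ▸ hle))
  let v : ι := ⟨⟨𝔭, h𝔭.isPrime, h𝔭bot⟩, Ideal.dvd_iff_le.mpr hle⟩
  refine hst v ?_
  simpa only [sub_sub_cancel] using
    (v.1.asIdeal * delta1 A).sub_mem hcorner (shear_corner_sub_mem A (hx v) (hy v))

theorem exists_isReducedForm_mem_doubleCoset' {A : Matrix (Fin 2) (Fin 2) O} (hA : A.det ≠ 0) :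
    ∃ A' ∈ doubleCoset' A, IsReducedForm A' := by
  obtain ⟨A₀, hA₀, hcorner⟩ := exists_mem_doubleCoset'_span_corner_sup_eq hA
  have hmem : ∀ i j, A₀ i j ∈ Ideal.span {A₀ 0 0} ⊔ delta1 A₀ * delta2 A₀ :=
    fun i j => by rw [hcorner]; exact entry_mem_delta1 A₀ i j
  obtain ⟨A', hA', h00, h01, h10⟩ := exists_mem_doubleCoset'_offDiag_mem (hmem 0 1) (hmem 1 0)
  have h1 := delta1_eq_of_mem_doubleCoset' hA'
  have h2 := delta2_eq_of_mem_doubleCoset' hA'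
  refine ⟨A', mem_doubleCoset'_trans hA₀ hA', ?_, ?_, ?_⟩
  · rw [h2]; exact Ideal.mul_le_right h01
  · rw [h2]; exact Ideal.mul_le_right h10
  · rw [h00, h1, h2, hcorner]

theorem IsReducedForm.mem_doubleCoset' {A B : Matrix (Fin 2) (Fin 2) O} (hA : IsReducedForm A)
    (hB : IsReducedForm B) (hdet : A.det ≠ 0) (h1 : delta1 A = delta1 B)
    (h2 : delta2 A = delta2 B) : B ∈ doubleCoset' A := by
  obtain ⟨J, hJ, hJd⟩ :=
    Ideal.exists_span_singleton_eq_mul_sup_eq_top (delta1_ne_bot hdet) hA.span_sup_mul_eq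
  obtain ⟨J', hJ', hJ'd⟩ := Ideal.exists_span_singleton_eq_mul_sup_eq_top
    (delta1_ne_bot (det_ne_zero_of_delta2_eq hdet h2)) hB.span_sup_mul_eq
  obtain ⟨Q, hQ, hq, ht, hQ01, hQ10⟩ := exists_det_eq_one_offDiag_mem hJd (h2 ▸ hJ'd)
  refine mem_doubleCoset'_of_det_dvd_mul_adjugate hdet h2 (hQ ▸ isUnit_one) fun i j => ?_
  rw [← Ideal.mem_span_singleton]
  change _ ∈ delta2 A
  rw [← Ideal.Quotient.eq_zero_iff_mem]
  have hπ : ∀ x ∈ delta2 A, Ideal.Quotient.mk (delta2 A) x = 0 :=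
    fun x hx => Ideal.Quotient.eq_zero_iff_mem.mpr hx
  have h00 : Ideal.Quotient.mk (delta2 A) (B 0 0 * Q 0 0 * A 1 1) = 0 :=
    hπ _ (hA.mul_mul_entry_mem hJ (h1 ▸ entry_mem_delta1 B 0 0) hq)
  have h11 : Ideal.Quotient.mk (delta2 A) (B 1 1 * Q 1 1 * A 0 0) = 0 := by
    rw [show B 1 1 * Q 1 1 * A 0 0 = A 0 0 * Q 1 1 * B 1 1 by ring]
    exact hπ _ (h2 ▸ hB.mul_mul_entry_mem hJ' (h1 ▸ entry_mem_delta1 A 0 0) ht)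
  simp only [map_mul] at h00 h11
  -- modulo `det A`, the matrices `A`, `B` and `Q` are diagonal
  fin_cases i <;> fin_cases j <;>
    simp [mul_apply, Fin.sum_univ_two, adjugate_fin_two, hπ _ hQ01, hπ _ hQ10,
      hπ _ hA.zero_one_mem, hπ _ hA.one_zero_mem, hπ _ (h2 ▸ hB.zero_one_mem),
      hπ _ (h2 ▸ hB.one_zero_mem), h00, h11]

end Dedekind

theorem stmt0_general {O : Type*} [CommRing O] [IsDedekindDomain O]
    (A B : Matrix (Fin 2) (Fin 2) O) (hA : A.det ≠ 0) :
    doubleCoset' A = doubleCoset' B ↔ delta1 A = delta1 B ∧ delta2 A = delta2 B := by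
  rw [doubleCoset'_eq_iff_mem]
  refine ⟨fun hB => ⟨(delta1_eq_of_mem_doubleCoset' hB).symm,
    (delta2_eq_of_mem_doubleCoset' hB).symm⟩, fun ⟨h1, h2⟩ => ?_⟩
  obtain ⟨A', hA'A, hA'⟩ := exists_isReducedForm_mem_doubleCoset' hA
  obtain ⟨B', hB'B, hB'⟩ :=
    exists_isReducedForm_mem_doubleCoset' (det_ne_zero_of_delta2_eq hA h2)
  have hB'A' : B' ∈ doubleCoset' A' := by
    refine hA'.mem_doubleCoset' hB' ?_ ?_ ?_
    · exact det_ne_zero_of_delta2_eq hA (delta2_eq_of_mem_doubleCoset' hA'A).symm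
    · rw [delta1_eq_of_mem_doubleCoset' hA'A, delta1_eq_of_mem_doubleCoset' hB'B, h1]
    · rw [delta2_eq_of_mem_doubleCoset' hA'A, delta2_eq_of_mem_doubleCoset' hB'B, h2]
  exact mem_doubleCoset'_trans (mem_doubleCoset'_trans hA'A hB'A') (mem_doubleCoset'_symm hB'B)

theorem stmt0 {O : Type*} [CommRing O] [IsDomain O] [IsDedekindDomain O]
    (A B : Matrix (Fin 2) (Fin 2) O) (hA : A.det ≠ 0) (hB : B.det ≠ 0) :
    doubleCoset' A = doubleCoset' B ↔ delta1 A = delta1 B ∧ delta2 A = delta2 B :=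
  stmt0_general A B hA
end

section
/- Let A ∈ I and let 𝔞 be an ideal of 𝒪 with δ₁(A) | 𝔞 | δ₂(A), let a ∈ 𝔞 be nonzero with a𝒪 + δ₂(A) = 𝔞, and set 𝔮 = 𝔞⁻¹·a𝒪 and 𝔟 = 𝔞⁻¹·δ₂(A). Then for every ideal 𝔠 of 𝒪 and every c ∈ 𝔮, the following are equivalent: (i) 𝔠 divides 𝔞 + (c−1)𝒪 + c·𝔮⁻¹𝔟; (ii) 𝔠 divides 𝔞, 𝔞𝔠 divides δ₂(A), and c − 1 ∈ 𝔠. -/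
open Matrix

/-!
Cancelling `𝔞` turns `𝔞𝔠 ∣ δ₂(A) = 𝔟𝔞` into `𝔠 ∣ 𝔟`. Given `𝔠 ∣ c - 1`, this is equivalent to
`𝔠 ∣ 𝔡`: as `𝔡𝔮 = c𝔟` with `c ∈ 𝔮`, one direction cancels `𝔮`, and for the other every `x ∈ 𝔟`
is `c x - (c - 1) x`.
-/

namespace Ideal

variable {R : Type*} [CommRing R]

theorem le_of_span_singleton_mul_le_of_sub_one_mem {𝔟 𝔠 : Ideal R} {c : R}
    (hc : span {c} * 𝔟 ≤ 𝔠) (hc1 : c - 1 ∈ 𝔠) : 𝔟 ≤ 𝔠 := by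
  intro x hx
  have hcx : c * x ∈ 𝔠 := hc (mul_mem_mul (mem_span_singleton_self c) hx)
  rw [show x = c * x - (c - 1) * x by ring]
  exact 𝔠.sub_mem hcx (𝔠.mul_mem_right x hc1)

theorem ne_bot_right_of_mul_eq_span_singleton [IsDomain R] {I J : Ideal R} {a : R} (ha : a ≠ 0)
    (h : I * J = span {a}) : J ≠ ⊥ := by
  rintro rfl
  exact ha (span_singleton_eq_bot.mp (by rw [← h, mul_bot]))

variable [IsDedekindDomain R]

theorem mul_le_mul_right_iff_of_ne_bot {I J K : Ideal R} (hK : K ≠ ⊥) :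
    I * K ≤ J * K ↔ I ≤ J := by
  simp only [← dvd_iff_le, mul_dvd_mul_iff_right hK]

theorem exists_mul_eq_span_singleton_mul {𝔮 : Ideal R} {c : R} (hc : c ∈ 𝔮) (𝔟 : Ideal R) :
    ∃ 𝔡 : Ideal R, 𝔡 * 𝔮 = span {c} * 𝔟 := by
  obtain ⟨𝔢, h𝔢⟩ := dvd_span_singleton.mpr hc
  exact ⟨𝔢 * 𝔟, by rw [h𝔢, mul_comm 𝔮, mul_right_comm]⟩

theorem le_iff_le_of_mul_eq_span_singleton_mul {𝔟 𝔠 𝔡 𝔮 : Ideal R} {c : R} (h𝔮 : 𝔮 ≠ ⊥)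
    (hc : c ∈ 𝔮) (h𝔡 : 𝔡 * 𝔮 = span {c} * 𝔟) (hc1 : c - 1 ∈ 𝔠) : 𝔡 ≤ 𝔠 ↔ 𝔟 ≤ 𝔠 := by
  constructor
  · intro h𝔡𝔠
    refine le_of_span_singleton_mul_le_of_sub_one_mem ?_ hc1
    exact h𝔡 ▸ (mul_le_left : 𝔡 * 𝔮 ≤ 𝔡).trans h𝔡𝔠
  · intro h𝔟𝔠
    rw [← mul_le_mul_right_iff_of_ne_bot h𝔮, h𝔡, mul_comm]
    exact mul_mono h𝔟𝔠 ((span_singleton_le_iff_mem _).mpr hc)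

end Ideal

open Ideal in
theorem stmt6_general {O : Type*} [CommRing O] [IsDedekindDomain O]
    (A : Matrix (Fin 2) (Fin 2) O)
    (𝔞 : Ideal O)
    -- a nonzero `a ∈ 𝔞` with `a𝒪 + δ₂(A) = 𝔞`:
    (a : O) (ha : a ≠ 0)
    -- `𝔮 = 𝔞⁻¹·a𝒪` and `𝔟 = 𝔞⁻¹·δ₂(A)`, characterised by `𝔮𝔞 = a𝒪` and `𝔟𝔞 = δ₂(A)`:
    (𝔮 𝔟 : Ideal O) (h𝔮 : 𝔮 * 𝔞 = Ideal.span {a}) (h𝔟 : 𝔟 * 𝔞 = delta2 A)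
    (𝔠 : Ideal O) (c : O) (hc : c ∈ 𝔮) :
    -- (i) `𝔠 | 𝔞 + (c-1)𝒪 + c𝔮⁻¹𝔟`, where the ideal `𝔡 = c𝔮⁻¹𝔟` is characterised by
    -- `𝔡𝔮 = c𝒪·𝔟`:
    (∃ 𝔡 : Ideal O, 𝔡 * 𝔮 = Ideal.span {c} * 𝔟 ∧ 𝔞 + Ideal.span {c - 1} + 𝔡 ≤ 𝔠) ↔
      -- (ii) `𝔠 | 𝔞`, `𝔞𝔠 | δ₂(A)` and `𝔠 | c - 1`:
      (𝔞 ≤ 𝔠 ∧ delta2 A ≤ 𝔞 * 𝔠 ∧ c - 1 ∈ 𝔠) := by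
  have h𝔮0 : 𝔮 ≠ ⊥ := ne_bot_right_of_mul_eq_span_singleton ha (by rwa [mul_comm])
  have h𝔟𝔠 : delta2 A ≤ 𝔞 * 𝔠 ↔ 𝔟 ≤ 𝔠 := by
    rw [← h𝔟, mul_comm 𝔞, mul_le_mul_right_iff_of_ne_bot
      (ne_bot_right_of_mul_eq_span_singleton ha h𝔮)]
  simp only [Ideal.add_eq_sup, sup_le_iff, span_singleton_le_iff_mem, h𝔟𝔠]
  constructor
  · rintro ⟨𝔡, h𝔡, ⟨h𝔞𝔠, hc1⟩, h𝔡𝔠⟩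
    exact ⟨h𝔞𝔠, (le_iff_le_of_mul_eq_span_singleton_mul h𝔮0 hc h𝔡 hc1).mp h𝔡𝔠, hc1⟩
  · rintro ⟨h𝔞𝔠, h𝔟𝔠, hc1⟩
    obtain ⟨𝔡, h𝔡⟩ := exists_mul_eq_span_singleton_mul hc 𝔟
    exact ⟨𝔡, h𝔡, ⟨h𝔞𝔠, hc1⟩, (le_iff_le_of_mul_eq_span_singleton_mul h𝔮0 hc h𝔡 hc1).mpr h𝔟𝔠⟩

theorem stmt6 {O : Type*} [CommRing O] [IsDomain O] [IsDedekindDomain O]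
    -- `𝒪` is norm-finite:
    (hnf : ∀ x : O, x ≠ 0 → Finite (O ⧸ Ideal.span {x}))
    (A : Matrix (Fin 2) (Fin 2) O) (hA : A.det ≠ 0)
    -- `δ₁(A) | 𝔞 | δ₂(A)` (divisibility of ideals is reverse inclusion):
    (𝔞 : Ideal O) (h1 : 𝔞 ≤ delta1 A) (h2 : delta2 A ≤ 𝔞)
    -- a nonzero `a ∈ 𝔞` with `a𝒪 + δ₂(A) = 𝔞`:
    (a : O) (ha : a ≠ 0) (haa : a ∈ 𝔞) (hagen : Ideal.span {a} + delta2 A = 𝔞)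
    -- `𝔮 = 𝔞⁻¹·a𝒪` and `𝔟 = 𝔞⁻¹·δ₂(A)`, characterised by `𝔮𝔞 = a𝒪` and `𝔟𝔞 = δ₂(A)`:
    (𝔮 𝔟 : Ideal O) (h𝔮 : 𝔮 * 𝔞 = Ideal.span {a}) (h𝔟 : 𝔟 * 𝔞 = delta2 A)
    (𝔠 : Ideal O) (c : O) (hc : c ∈ 𝔮) :
    -- (i) `𝔠 | 𝔞 + (c-1)𝒪 + c𝔮⁻¹𝔟`, where the ideal `𝔡 = c𝔮⁻¹𝔟` is characterised by
    -- `𝔡𝔮 = c𝒪·𝔟`: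
    (∃ 𝔡 : Ideal O, 𝔡 * 𝔮 = Ideal.span {c} * 𝔟 ∧ 𝔞 + Ideal.span {c - 1} + 𝔡 ≤ 𝔠) ↔
      -- (ii) `𝔠 | 𝔞`, `𝔞𝔠 | δ₂(A)` and `𝔠 | c - 1`:
      (𝔞 ≤ 𝔠 ∧ delta2 A ≤ 𝔞 * 𝔠 ∧ c - 1 ∈ 𝔠) :=
  stmt6_general A 𝔞 a ha 𝔮 𝔟 h𝔮 h𝔟 𝔠 c hc
end

section
/- Let A ∈ I and let 𝔞 be an ideal of 𝒪 with δ₁(A) | 𝔞 | δ₂(A), let a ∈ 𝔞 be nonzero with a𝒪 + δ₂(A) = 𝔞, set 𝔮 = 𝔞⁻¹·a𝒪 and 𝔟 = 𝔞⁻¹·δ₂(A), and let T be a transversal of 𝔮/𝔮𝔟. Then for every ideal 𝔠 of 𝒪 satisfying 𝔠 | 𝔞 | δ₂(A)·𝔠⁻¹, one has |{c ∈ T : c − 1 ∈ 𝔠}| = N(𝔟)·N(𝔠)⁻¹. -/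
/-! Since `𝔮𝔞 + 𝔟𝔞 = a𝒪 + δ₂(A) = 𝔞`, the ideals `𝔮` and `𝔟` are coprime, so `𝔮 ∩ 𝔟 = 𝔮𝔟` and
reduction modulo `𝔟` maps a transversal of `𝔮/𝔮𝔟` bijectively onto `𝒪/𝔟`. Cancelling `𝔞` in
`𝔟𝔞 = δ₂(A) ⊆ 𝔠𝔞` gives `𝔟 ⊆ 𝔠`, and the residues modulo `𝔟` that are `≡ 1 mod 𝔠` form a coset
of `𝔠/𝔟`, which has `N(𝔟)/N(𝔠)` elements. -/

open Matrix

/-- `T` is a transversal of the quotient of ideals `I/J`: it consists of elements of `I` and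
contains exactly one representative of each residue class of `I` modulo `J`. -/
def IsTransversal {O : Type*} [CommRing O] (I J : Ideal O) (T : Set O) : Prop :=
  T ⊆ (I : Set O) ∧ ∀ x ∈ I, ∃! t, t ∈ T ∧ x - t ∈ J

namespace IsTransversal

variable {R : Type*} [CommRing R] {I J : Ideal R} {T : Set R}

theorem bijective_mk (hT : IsTransversal I (I * J) T) (hIJ : IsCoprime I J) :
    Function.Bijective fun t : T ↦ Ideal.Quotient.mk J t := by
  constructor
  · rintro ⟨t, ht⟩ ⟨t', ht'⟩ h
    have hJ : t - t' ∈ J := Ideal.Quotient.eq.mp h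
    have hIJ : t - t' ∈ I * J := by
      rw [Ideal.mul_eq_inf_of_isCoprime hIJ]
      exact ⟨sub_mem (hT.1 ht) (hT.1 ht'), hJ⟩
    obtain ⟨u, -, hu⟩ := hT.2 t (hT.1 ht)
    exact Subtype.ext <| (hu t ⟨ht, by simp⟩).trans (hu t' ⟨ht', hIJ⟩).symm
  · intro y
    obtain ⟨x, rfl⟩ := Ideal.Quotient.mk_surjective y
    obtain ⟨i, hi, j, hj, rfl⟩ :=
      Submodule.mem_sup.mp (Ideal.isCoprime_iff_sup_eq.mp hIJ ▸ Submodule.mem_top (x := x))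
    obtain ⟨t, ⟨ht, hit⟩, -⟩ := hT.2 i hi
    refine ⟨⟨t, ht⟩, Ideal.Quotient.eq.mpr ?_⟩
    have : t - (i + j) = -(i - t) - j := by ring
    rw [this]
    exact sub_mem (neg_mem (Ideal.mul_le_right hit)) hj

theorem card_sub_one_mem_eq (hT : IsTransversal I (I * J) T) (hIJ : IsCoprime I J) {C : Ideal R}
    (hJC : J ≤ C) :
    Nat.card {c : R // c ∈ T ∧ c - 1 ∈ C} = Nat.card (C.map (Ideal.Quotient.mk J)) := by
  have hmem (t : R) : t - 1 ∈ C ↔ Ideal.Quotient.mk J t - 1 ∈ C.map (Ideal.Quotient.mk J) := by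
    rw [← map_one (Ideal.Quotient.mk J), ← map_sub, Ideal.mem_quotient_iff_mem hJC]
  refine Nat.card_congr <| (Equiv.subtypeSubtypeEquivSubtypeInter (· ∈ T) (· - 1 ∈ C)).symm.trans <|
    ((Equiv.ofBijective _ (hT.bijective_mk hIJ)).subtypeEquiv fun t ↦ hmem t).trans <|
    (Equiv.subRight (1 : R ⧸ J)).subtypeEquiv (q := (· ∈ C.map (Ideal.Quotient.mk J)))
      fun _ ↦ Iff.rfl

theorem card_sub_one_mem_mul_card (hT : IsTransversal I (I * J) T) (hIJ : IsCoprime I J)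
    {C : Ideal R} (hJC : J ≤ C) :
    Nat.card {c : R // c ∈ T ∧ c - 1 ∈ C} * Nat.card (R ⧸ C) = Nat.card (R ⧸ J) := by
  rw [hT.card_sub_one_mem_eq hIJ hJC,
    Submodule.card_eq_card_quotient_mul_card (R := R ⧸ J) (C.map (Ideal.Quotient.mk J)),
    Nat.card_congr (DoubleQuot.quotQuotEquivQuotOfLE hJC).toEquiv]

end IsTransversal

section Dedekind

variable {R : Type*} [CommRing R] [IsDedekindDomain R] {P Q A : Ideal R}

theorem Ideal.isCoprime_of_mul_sup_mul_eq (hA : A ≠ ⊥) (h : P * A ⊔ Q * A = A) :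
    IsCoprime P Q := by
  rw [Ideal.isCoprime_iff_sup_eq]
  apply mul_right_cancel₀ hA
  rw [Ideal.sup_mul, h, Ideal.top_mul]

theorem Ideal.le_of_mul_le_mul_right (hA : A ≠ ⊥) (h : P * A ≤ Q * A) : P ≤ Q := by
  rw [← Ideal.dvd_iff_le] at h ⊢
  exact (mul_dvd_mul_iff_right hA).mp h

end Dedekind

theorem Ideal.finite_quotient_of_le {R : Type*} [CommRing R] {I J : Ideal R} [Finite (R ⧸ I)]
    (h : I ≤ J) : Finite (R ⧸ J) :=
  Finite.of_surjective _ (Ideal.Quotient.factor_surjective h)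

theorem stmt7_general {O : Type*} [CommRing O] [IsDedekindDomain O]
    -- `𝒪` is norm-finite:
    (hnf : ∀ x : O, x ≠ 0 → Finite (O ⧸ Ideal.span {x}))
    (A : Matrix (Fin 2) (Fin 2) O) (hA : A.det ≠ 0)
    (𝔞 : Ideal O)
    -- a nonzero `a ∈ 𝔞` with `a𝒪 + δ₂(A) = 𝔞`:
    (a : O) (hagen : Ideal.span {a} + delta2 A = 𝔞)
    -- `𝔮 = 𝔞⁻¹·a𝒪` and `𝔟 = 𝔞⁻¹·δ₂(A)`, characterised by `𝔮𝔞 = a𝒪` and `𝔟𝔞 = δ₂(A)`: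
    (𝔮 𝔟 : Ideal O) (h𝔮 : 𝔮 * 𝔞 = Ideal.span {a}) (h𝔟 : 𝔟 * 𝔞 = delta2 A)
    -- `T` is a transversal of `𝔮/𝔮𝔟`:
    (T : Set O) (hT : IsTransversal 𝔮 (𝔮 * 𝔟) T)
    -- an ideal `𝔠` with `𝔠 | 𝔞 | δ₂(A)·𝔠⁻¹`:
    (𝔠 : Ideal O) (hc2 : delta2 A ≤ 𝔞 * 𝔠) :
    (Nat.card {c : O // c ∈ T ∧ c - 1 ∈ 𝔠} : ℚ) =
      (Nat.card (O ⧸ 𝔟) : ℚ) * (Nat.card (O ⧸ 𝔠) : ℚ)⁻¹ := by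
  have h𝔞 : 𝔞 ≠ ⊥ := by
    rintro rfl
    have : delta2 A = ⊥ := by rw [← h𝔟, Ideal.mul_bot]
    exact hA (Ideal.span_singleton_eq_bot.mp this)
  have hcop : IsCoprime 𝔮 𝔟 :=
    Ideal.isCoprime_of_mul_sup_mul_eq h𝔞 (by rw [h𝔮, h𝔟, ← hagen, Submodule.add_eq_sup])
  have h𝔟𝔠 : 𝔟 ≤ 𝔠 := Ideal.le_of_mul_le_mul_right h𝔞 (by rwa [h𝔟, mul_comm])
  have hδ𝔟 : delta2 A ≤ 𝔟 := h𝔟 ▸ Ideal.mul_le_left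
  have : Finite (O ⧸ delta2 A) := hnf _ hA
  have : Finite (O ⧸ 𝔟) := Ideal.finite_quotient_of_le hδ𝔟
  have : Finite (O ⧸ 𝔠) := Ideal.finite_quotient_of_le h𝔟𝔠
  rw [← hT.card_sub_one_mem_mul_card hcop h𝔟𝔠, Nat.cast_mul,
    mul_inv_cancel_right₀ (Nat.cast_ne_zero.mpr Nat.card_pos.ne')]

theorem stmt7 {O : Type*} [CommRing O] [IsDomain O] [IsDedekindDomain O]
    -- `𝒪` is norm-finite:
    (hnf : ∀ x : O, x ≠ 0 → Finite (O ⧸ Ideal.span {x}))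
    (A : Matrix (Fin 2) (Fin 2) O) (hA : A.det ≠ 0)
    -- `δ₁(A) | 𝔞 | δ₂(A)` (divisibility of ideals is reverse inclusion):
    (𝔞 : Ideal O) (h1 : 𝔞 ≤ delta1 A) (h2 : delta2 A ≤ 𝔞)
    -- a nonzero `a ∈ 𝔞` with `a𝒪 + δ₂(A) = 𝔞`:
    (a : O) (ha : a ≠ 0) (haa : a ∈ 𝔞) (hagen : Ideal.span {a} + delta2 A = 𝔞)
    -- `𝔮 = 𝔞⁻¹·a𝒪` and `𝔟 = 𝔞⁻¹·δ₂(A)`, characterised by `𝔮𝔞 = a𝒪` and `𝔟𝔞 = δ₂(A)`: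
    (𝔮 𝔟 : Ideal O) (h𝔮 : 𝔮 * 𝔞 = Ideal.span {a}) (h𝔟 : 𝔟 * 𝔞 = delta2 A)
    -- `T` is a transversal of `𝔮/𝔮𝔟`:
    (T : Set O) (hT : IsTransversal 𝔮 (𝔮 * 𝔟) T)
    -- an ideal `𝔠` with `𝔠 | 𝔞 | δ₂(A)·𝔠⁻¹`:
    (𝔠 : Ideal O) (hc1 : 𝔞 ≤ 𝔠) (hc2 : delta2 A ≤ 𝔞 * 𝔠) :
    (Nat.card {c : O // c ∈ T ∧ c - 1 ∈ 𝔠} : ℚ) =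
      (Nat.card (O ⧸ 𝔟) : ℚ) * (Nat.card (O ⧸ 𝔠) : ℚ)⁻¹ :=
  stmt7_general hnf A hA 𝔞 a hagen 𝔮 𝔟 h𝔮 h𝔟 T hT 𝔠 hc2
end

section
/- Let a, b, c ∈ 𝒪 be nonzero, and let A = (1, 0; 0, a), B = (1, 0; 0, b), C = (1, 0; 0, c). Let A₁, …, A_k and B₁, …, B_m be complete systems of representatives of the right cosets of U contained in U A U and in U B U, respectively (so U A U = U A₁ ∪ ⋯ ∪ U A_k and U B U = U B₁ ∪ ⋯ ∪ U B_m with pairwise disjoint unions). Then the number of pairs (i, j) with 1 ≤ i ≤ k, 1 ≤ j ≤ m, and A_i B_j ∈ U C equals 1 if c ∈ a·b·𝒪^*, and equals 0 otherwise. -/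
open Matrix

/-- The right coset `U·B` with respect to the unimodular group
`U = GL₂(𝒪)` (matrices over `𝒪` whose determinant is a unit). -/
def rightCoset' {O : Type*} [CommRing O] (B : Matrix (Fin 2) (Fin 2) O) :
    Set (Matrix (Fin 2) (Fin 2) O) :=
  {X | ∃ P : Matrix (Fin 2) (Fin 2) O, IsUnit P.det ∧ X = P * B}

namespace Stmt14Aux

variable {O : Type*} [CommRing O]

/-- The diagonal matrix `(1, 0; 0, x)`. -/
def D (x : O) : Matrix (Fin 2) (Fin 2) O := !![1, 0; 0, x]

lemma det_D (x : O) : (D x).det = x := by simp [D]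

lemma D_mul (x y : O) : D x * D y = D (x * y) := by
  ext i j
  fin_cases i <;> fin_cases j <;>
    simp [D, Matrix.mul_apply, Fin.sum_univ_two]

lemma mem_self (X : Matrix (Fin 2) (Fin 2) O) : X ∈ rightCoset' X :=
  ⟨1, by simp, (one_mul X).symm⟩

lemma coset_trans {X Y Z : Matrix (Fin 2) (Fin 2) O}
    (h1 : X ∈ rightCoset' Y) (h2 : Y ∈ rightCoset' Z) : X ∈ rightCoset' Z := by
  obtain ⟨P, hP, rfl⟩ := h1
  obtain ⟨Q, hQ, rfl⟩ := h2
  exact ⟨P * Q, by rw [Matrix.det_mul]; exact hP.mul hQ, (mul_assoc P Q Z).symm⟩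

lemma eq_of_mem_inter {n : ℕ} {f : Fin n → Matrix (Fin 2) (Fin 2) O}
    (hdis : ∀ i j, i ≠ j → rightCoset' (f i) ∩ rightCoset' (f j) = ∅)
    {X : Matrix (Fin 2) (Fin 2) O} {i j : Fin n}
    (hi : X ∈ rightCoset' (f i)) (hj : X ∈ rightCoset' (f j)) : i = j := by
  by_contra h
  have h2 := hdis i j h
  have : X ∈ rightCoset' (f i) ∩ rightCoset' (f j) := ⟨hi, hj⟩
  rw [h2] at this
  exact this

lemma cancel_D [IsDomain O] {e : O} (he : e ≠ 0) {X Y : Matrix (Fin 2) (Fin 2) O}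
    (h : X * D e = Y * D e) : X = Y := by
  have h' : ∀ i j, (X * D e) i j = (Y * D e) i j := fun i j => by rw [h]
  ext i j
  fin_cases j
  · have := h' i 0
    simpa [D, Matrix.mul_apply, Fin.sum_univ_two] using this
  · have := h' i 1
    simp [D, Matrix.mul_apply, Fin.sum_univ_two] at this
    exact this.resolve_right he

lemma det_mem_double {A X : Matrix (Fin 2) (Fin 2) O} (h : X ∈ doubleCoset' A) :
    ∃ v : Oˣ, X.det = A.det * v := by
  obtain ⟨P, Q, hP, hQ, rfl⟩ := h
  obtain ⟨p, hp⟩ := hP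
  obtain ⟨q, hq⟩ := hQ
  refine ⟨p * q, ?_⟩
  rw [Matrix.det_mul, Matrix.det_mul, ← hp, ← hq, Units.val_mul]
  ring

end Stmt14Aux

open Stmt14Aux

theorem stmt14 {O : Type*} [CommRing O] [IsDomain O] [IsDedekindDomain O]
    -- `𝒪` is norm-finite:
    (hnf : ∀ x : O, x ≠ 0 → Finite (O ⧸ Ideal.span {x}))
    (a b c : O) (ha : a ≠ 0) (hb : b ≠ 0) (hc : c ≠ 0)
    (k m : ℕ)
    (Af : Fin k → Matrix (Fin 2) (Fin 2) O) (Bf : Fin m → Matrix (Fin 2) (Fin 2) O)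
    -- `A₁, …, A_k` is a complete system of representatives of the right cosets of `U`
    -- contained in `U A U`, where `A = (1, 0; 0, a)`:
    (hAcov : doubleCoset' !![1, 0; 0, a] = ⋃ i, rightCoset' (Af i))
    (hAdis : ∀ i j, i ≠ j → rightCoset' (Af i) ∩ rightCoset' (Af j) = ∅)
    -- `B₁, …, B_m` is a complete system of representatives of the right cosets of `U`
    -- contained in `U B U`, where `B = (1, 0; 0, b)`:
    (hBcov : doubleCoset' !![1, 0; 0, b] = ⋃ j, rightCoset' (Bf j))
    (hBdis : ∀ i j, i ≠ j → rightCoset' (Bf i) ∩ rightCoset' (Bf j) = ∅) :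
    -- the number of pairs `(i, j)` with `A_i B_j ∈ U C`, where `C = (1, 0; 0, c)`,
    -- is `1` if `c ∈ a·b·𝒪^*` and `0` otherwise:
    ((∃ u : Oˣ, c = a * b * u) →
        Nat.card {p : Fin k × Fin m //
          Af p.1 * Bf p.2 ∈ rightCoset' !![1, 0; 0, c]} = 1) ∧
      ((¬∃ u : Oˣ, c = a * b * u) →
        Nat.card {p : Fin k × Fin m //
          Af p.1 * Bf p.2 ∈ rightCoset' !![1, 0; 0, c]} = 0) := by
  have hAcov' : doubleCoset' (D a) = ⋃ i, rightCoset' (Af i) := hAcov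
  have hBcov' : doubleCoset' (D b) = ⋃ j, rightCoset' (Bf j) := hBcov
  -- every `Af i` (resp. `Bf j`) lies in the corresponding double coset
  have hAmem : ∀ i, Af i ∈ doubleCoset' (D a) := fun i => by
    rw [hAcov']; exact Set.mem_iUnion.2 ⟨i, mem_self _⟩
  have hBmem : ∀ j, Bf j ∈ doubleCoset' (D b) := fun j => by
    rw [hBcov']; exact Set.mem_iUnion.2 ⟨j, mem_self _⟩
  constructor
  · rintro ⟨u, hcu⟩
    have hbu : b * (u : O) ≠ 0 := mul_ne_zero hb u.ne_zero
    -- `D (b*u)` lies in the double coset of `D b`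
    have hDbu : D (b * (u : O)) ∈ doubleCoset' (D b) := by
      refine ⟨1, D (u : O), by simp, ?_, ?_⟩
      · rw [det_D]; exact u.isUnit
      · rw [one_mul, D_mul]
    rw [hBcov'] at hDbu
    obtain ⟨j₀, Q₀, hQ₀, hBj0⟩ : ∃ j₀, D (b * (u : O)) ∈ rightCoset' (Bf j₀) := by
      simpa [Set.mem_iUnion] using hDbu
    haveI : Invertible Q₀ := Q₀.invertibleOfIsUnitDet hQ₀
    have hBj0' : Bf j₀ = ⅟Q₀ * D (b * (u : O)) := by
      rw [hBj0, invOf_mul_cancel_left]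
    -- `D a * Q₀` lies in the double coset of `D a`
    have hDaQ : D a * Q₀ ∈ doubleCoset' (D a) := ⟨1, Q₀, by simp, hQ₀, by rw [one_mul]⟩
    rw [hAcov'] at hDaQ
    obtain ⟨i₀, P₀, hP₀, hAi0⟩ : ∃ i₀, D a * Q₀ ∈ rightCoset' (Af i₀) := by
      simpa [Set.mem_iUnion] using hDaQ
    haveI : Invertible P₀ := P₀.invertibleOfIsUnitDet hP₀
    have hAi0' : Af i₀ = ⅟P₀ * (D a * Q₀) := by
      rw [hAi0, invOf_mul_cancel_left]
    have hcabu : c = a * (b * (u : O)) := by rw [hcu]; ring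
    -- existence: `(i₀, j₀)` works
    have hmem : Af i₀ * Bf j₀ ∈ rightCoset' (D c) := by
      refine ⟨⅟P₀, Matrix.isUnit_det_of_invertible _, ?_⟩
      rw [hAi0', hBj0']
      calc ⅟P₀ * (D a * Q₀) * (⅟Q₀ * D (b * (u : O)))
          = ⅟P₀ * (D a * (Q₀ * ⅟Q₀ * D (b * (u : O)))) := by
            simp only [mul_assoc]
        _ = ⅟P₀ * (D a * D (b * (u : O))) := by rw [mul_invOf_self, one_mul]
        _ = ⅟P₀ * D c := by rw [D_mul, ← hcabu]
    -- uniqueness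
    have huniq : ∀ p : Fin k × Fin m,
        Af p.1 * Bf p.2 ∈ rightCoset' (D c) → p = (i₀, j₀) := by
      rintro ⟨i, j⟩ ⟨P, hP, hPeq⟩
      dsimp only at hPeq
      haveI : Invertible P := P.invertibleOfIsUnitDet hP
      obtain ⟨R, S, hR, hS, hAi⟩ := hAmem i
      haveI : Invertible R := R.invertibleOfIsUnitDet hR
      haveI : Invertible S := S.invertibleOfIsUnitDet hS
      set T : Matrix (Fin 2) (Fin 2) O := ⅟R * P with hT
      set N : Matrix (Fin 2) (Fin 2) O := S * Bf j with hNdef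
      have h0 : R * (D a * N) = P * D c := by
        rw [hNdef, ← mul_assoc, ← mul_assoc, ← hAi, ← hPeq]
      have hDN : D a * N = T * D c := by
        rw [hT, mul_assoc, ← invOf_mul_cancel_left R (D a * N), h0]
      have hN : ∀ i' j', (D a * N) i' j' = (T * D c) i' j' := fun i' j' => by rw [hDN]
      have e00 : N 0 0 = T 0 0 := by
        have := hN 0 0
        simpa [D, Matrix.mul_apply, Fin.sum_univ_two] using this
      have e01 : N 0 1 = T 0 1 * c := by
        have := hN 0 1
        simpa [D, Matrix.mul_apply, Fin.sum_univ_two] using this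
      have e10 : a * N 1 0 = T 1 0 := by
        have := hN 1 0
        simpa [D, Matrix.mul_apply, Fin.sum_univ_two] using this
      have e11 : a * N 1 1 = T 1 1 * c := by
        have := hN 1 1
        simpa [D, Matrix.mul_apply, Fin.sum_univ_two] using this
      have e11' : N 1 1 = T 1 1 * (b * (u : O)) := by
        apply mul_left_cancel₀ ha
        rw [e11, hcu]; ring
      set W : Matrix (Fin 2) (Fin 2) O := !![T 0 0, T 0 1 * a; N 1 0, T 1 1] with hW
      have hNW : N = W * D (b * (u : O)) := by
        ext i' j'
        fin_cases i' <;> fin_cases j' <;>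
          simp [hW, D, Matrix.mul_apply, Fin.sum_univ_two]
        · exact e00
        · rw [e01, hcu]; ring
        · exact e11'
      have hdetW : IsUnit W.det := by
        have : W.det = T.det := by
          rw [hW, Matrix.det_fin_two_of, Matrix.det_fin_two, ← e10]; ring
        rw [this, hT, Matrix.det_mul]
        exact (Matrix.isUnit_det_of_invertible (⅟R)).mul hP
      -- `Bf j` lies in the right coset of `D (b*u)`, hence of `Bf j₀`
      have hBjco : Bf j ∈ rightCoset' (D (b * (u : O))) := by
        refine ⟨⅟S * W, ?_, ?_⟩
        · rw [Matrix.det_mul]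
          exact (Matrix.isUnit_det_of_invertible (⅟S)).mul hdetW
        · have : Bf j = ⅟S * N := by rw [hNdef, invOf_mul_cancel_left]
          rw [this, hNW, mul_assoc]
      have hj : j = j₀ := eq_of_mem_inter hBdis (mem_self (Bf j))
        (coset_trans hBjco ⟨Q₀, hQ₀, hBj0⟩)
      subst hj
      -- now determine `i`
      have hkey : (Af i * ⅟Q₀) * D (b * (u : O)) = (P * D a) * D (b * (u : O)) := by
        calc (Af i * ⅟Q₀) * D (b * (u : O)) = Af i * Bf j := by
              rw [hBj0', mul_assoc]
          _ = P * D c := hPeq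
          _ = (P * D a) * D (b * (u : O)) := by rw [mul_assoc, D_mul, ← hcabu]
      have hAiQ : Af i * ⅟Q₀ = P * D a := cancel_D hbu hkey
      have hAi' : Af i = P * D a * Q₀ := by
        have := congrArg (· * Q₀) hAiQ
        simpa [mul_assoc] using this
      have hAico : Af i ∈ rightCoset' (Af i₀) := by
        refine ⟨P * P₀, ?_, ?_⟩
        · rw [Matrix.det_mul]
          exact hP.mul hP₀
        · rw [hAi', mul_assoc, hAi0, ← mul_assoc]
      have hi : i = i₀ := eq_of_mem_inter hAdis (mem_self (Af i)) hAico
      simp [hi]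
    -- count
    rw [Nat.card_eq_one_iff_unique]
    constructor
    · exact ⟨fun ⟨p, hp⟩ ⟨q, hq⟩ => Subtype.ext ((huniq p hp).trans (huniq q hq).symm)⟩
    · exact ⟨⟨(i₀, j₀), hmem⟩⟩
  · intro hno
    have : IsEmpty {p : Fin k × Fin m //
        Af p.1 * Bf p.2 ∈ rightCoset' !![1, 0; 0, c]} := by
      refine ⟨?_⟩
      rintro ⟨⟨i, j⟩, P, hP, hPeq⟩
      dsimp only at hPeq
      have hPeq' : Af i * Bf j = P * D c := hPeq
      obtain ⟨v, hv⟩ := det_mem_double (hAmem i)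
      obtain ⟨w, hw⟩ := det_mem_double (hBmem j)
      obtain ⟨p, hp⟩ := hP
      apply hno
      refine ⟨v * w * p⁻¹, ?_⟩
      have hdet : (Af i).det * (Bf j).det = P.det * c := by
        have := congrArg Matrix.det hPeq'
        rwa [Matrix.det_mul, Matrix.det_mul, det_D] at this
      rw [hv, hw, det_D, det_D, ← hp] at hdet
      have h1 : ((p⁻¹ : Oˣ) : O) * (p : O) = 1 := by
        rw [← Units.val_mul, inv_mul_cancel, Units.val_one]
      calc c = ((p⁻¹ : Oˣ) : O) * (p : O) * c := by rw [h1, one_mul]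
        _ = ((p⁻¹ : Oˣ) : O) * (a * (v : O) * (b * (w : O))) := by
            rw [mul_assoc, ← hdet]
        _ = a * b * ((v * w * p⁻¹ : Oˣ) : O) := by
            simp only [Units.val_mul]; ring
    exact Nat.card_of_isEmpty
end

section
/- Let A, B ∈ I, and let A₁, …, A_k and B₁, …, B_m be complete systems of representatives of the right cosets of U contained in U A U and in U B U, respectively. Then the number of pairs (i, j) with 1 ≤ i ≤ k, 1 ≤ j ≤ m, and 𝔤(A_i B_j) = 𝒪 equals μ_𝒪(A) · μ_𝒪(B), where μ_𝒪(X) denotes the number of right cosets U·Y contained in U X U with 𝔤(Y) = 𝒪. -/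
open Matrix

/-- The g.c.d. `𝔤(A)` of the first column of `A`. -/
def gcol {O : Type*} [CommRing O] (A : Matrix (Fin 2) (Fin 2) O) : Ideal O :=
  Ideal.span {A 0 0, A 1 0}

/-- `μ_𝔞(A)`: the number of right cosets `U·B` contained in `U A U` whose first column has
g.c.d. `𝔞`. -/
noncomputable def muIdeal {O : Type*} [CommRing O] (A : Matrix (Fin 2) (Fin 2) O)
    (𝔞 : Ideal O) : ℕ :=
  Nat.card {S : Set (Matrix (Fin 2) (Fin 2) O) //
    ∃ B, S = rightCoset' B ∧ S ⊆ doubleCoset' A ∧ gcol B = 𝔞}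

namespace Stmt15Aux

variable {O : Type*} [CommRing O]

lemma gcol_mul_le (C B : Matrix (Fin 2) (Fin 2) O) : gcol (C * B) ≤ gcol B := by
  have h : ∀ i, (C * B) i 0 ∈ gcol B := by
    intro i
    rw [Matrix.mul_apply, Fin.sum_univ_two]
    exact Ideal.add_mem _
      (Ideal.mul_mem_left _ _ (Ideal.subset_span (by simp)))
      (Ideal.mul_mem_left _ _ (Ideal.subset_span (by simp)))
  rw [gcol, Ideal.span_le, Set.insert_subset_iff, Set.singleton_subset_iff]
  exact ⟨h 0, h 1⟩

lemma gcol_unit_mul {P : Matrix (Fin 2) (Fin 2) O} (hP : IsUnit P.det)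
    (B : Matrix (Fin 2) (Fin 2) O) : gcol (P * B) = gcol B := by
  refine le_antisymm (gcol_mul_le P B) ?_
  have := gcol_mul_le P⁻¹ (P * B)
  rwa [← mul_assoc, Matrix.nonsing_inv_mul P hP, one_mul] at this

lemma mem_self (B : Matrix (Fin 2) (Fin 2) O) : B ∈ rightCoset' B :=
  ⟨1, by simp, by simp⟩

lemma coset_eq {B C : Matrix (Fin 2) (Fin 2) O} (h : B ∈ rightCoset' C) :
    rightCoset' B = rightCoset' C := by
  obtain ⟨P, hP, rfl⟩ := h
  ext X
  constructor
  · rintro ⟨Q, hQ, rfl⟩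
    exact ⟨Q * P, by rw [Matrix.det_mul]; exact hQ.mul hP, by rw [mul_assoc]⟩
  · rintro ⟨Q, hQ, rfl⟩
    refine ⟨Q * P⁻¹, by rw [Matrix.det_mul]; exact hQ.mul (Matrix.isUnit_nonsing_inv_det P hP), ?_⟩
    rw [mul_assoc, ← mul_assoc P⁻¹, Matrix.nonsing_inv_mul P hP, one_mul]

lemma rc_subset {A B : Matrix (Fin 2) (Fin 2) O} (h : B ∈ doubleCoset' A) :
    rightCoset' B ⊆ doubleCoset' A := by
  rintro X ⟨R, hR, rfl⟩
  obtain ⟨P, Q, hP, hQ, rfl⟩ := h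
  exact ⟨R * P, Q, by rw [Matrix.det_mul]; exact hR.mul hP, hQ, by simp [mul_assoc]⟩

lemma mu_eq (A : Matrix (Fin 2) (Fin 2) O) (k : ℕ) (Af : Fin k → Matrix (Fin 2) (Fin 2) O)
    (hcov : doubleCoset' A = ⋃ i, rightCoset' (Af i))
    (hdis : ∀ i j, i ≠ j → rightCoset' (Af i) ∩ rightCoset' (Af j) = ∅) :
    muIdeal A ⊤ = Nat.card {i : Fin k // gcol (Af i) = ⊤} := by
  have hAfm : ∀ i, Af i ∈ doubleCoset' A := fun i => by
    rw [hcov]; exact Set.mem_iUnion.mpr ⟨i, mem_self _⟩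
  refine (Nat.card_eq_of_bijective
    (fun i : {i : Fin k // gcol (Af i) = ⊤} =>
      (⟨rightCoset' (Af i.1), Af i.1, rfl, rc_subset (hAfm i.1), i.2⟩ :
        {S : Set (Matrix (Fin 2) (Fin 2) O) //
          ∃ B, S = rightCoset' B ∧ S ⊆ doubleCoset' A ∧ gcol B = ⊤})) ⟨?_, ?_⟩).symm
  · intro i i' h
    have hS : rightCoset' (Af i.1) = rightCoset' (Af i'.1) := congrArg Subtype.val h
    by_contra hne
    have hne' : i.1 ≠ i'.1 := fun e => hne (Subtype.ext e)
    have : Af i.1 ∈ rightCoset' (Af i.1) ∩ rightCoset' (Af i'.1) :=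
      ⟨mem_self _, hS ▸ mem_self _⟩
    rw [hdis _ _ hne'] at this
    exact this
  · rintro ⟨S, Bc, rfl, hsub, hg⟩
    have hBm : Bc ∈ doubleCoset' A := hsub (mem_self Bc)
    rw [hcov] at hBm
    obtain ⟨i, hi⟩ := Set.mem_iUnion.mp hBm
    have hco : rightCoset' Bc = rightCoset' (Af i) := coset_eq hi
    have hgi : gcol (Af i) = ⊤ := by
      obtain ⟨P, hP, hPe⟩ := hi
      rw [hPe, gcol_unit_mul hP] at hg; exact hg
    exact ⟨⟨i, hgi⟩, Subtype.ext hco.symm⟩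

end Stmt15Aux

theorem stmt15 {O : Type*} [CommRing O] [IsDomain O] [IsDedekindDomain O]
    -- `𝒪` is norm-finite:
    (hnf : ∀ x : O, x ≠ 0 → Finite (O ⧸ Ideal.span {x}))
    (A B : Matrix (Fin 2) (Fin 2) O) (hA : A.det ≠ 0) (hB : B.det ≠ 0)
    (k m : ℕ)
    (Af : Fin k → Matrix (Fin 2) (Fin 2) O) (Bf : Fin m → Matrix (Fin 2) (Fin 2) O)
    -- `A₁, …, A_k` is a complete system of representatives of the right cosets of `U`
    -- contained in `U A U`:
    (hAcov : doubleCoset' A = ⋃ i, rightCoset' (Af i))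
    (hAdis : ∀ i j, i ≠ j → rightCoset' (Af i) ∩ rightCoset' (Af j) = ∅)
    -- `B₁, …, B_m` is a complete system of representatives of the right cosets of `U`
    -- contained in `U B U`:
    (hBcov : doubleCoset' B = ⋃ j, rightCoset' (Bf j))
    (hBdis : ∀ i j, i ≠ j → rightCoset' (Bf i) ∩ rightCoset' (Bf j) = ∅) :
    -- the number of pairs `(i, j)` with `𝔤(A_i B_j) = 𝒪` equals `μ_𝒪(A) · μ_𝒪(B)`:
    Nat.card {p : Fin k × Fin m // gcol (Af p.1 * Bf p.2) = ⊤} =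
      muIdeal A ⊤ * muIdeal B ⊤ := by
  classical
  open Stmt15Aux in
  -- per-column count
  have key : ∀ j : Fin m, Nat.card {i : Fin k // gcol (Af i * Bf j) = ⊤} =
      if gcol (Bf j) = ⊤ then Nat.card {i : Fin k // gcol (Af i) = ⊤} else 0 := by
    intro j
    by_cases hj : gcol (Bf j) = ⊤
    · rw [if_pos hj]
      have h1 : (1 : O) ∈ gcol (Bf j) := by rw [hj]; trivial
      obtain ⟨x, y, hxy⟩ := Ideal.mem_span_pair.mp h1
      set P : Matrix (Fin 2) (Fin 2) O := !![x, y; -(Bf j 1 0), Bf j 0 0] with hPdef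
      have hPdet : P.det = 1 := by
        rw [hPdef, Matrix.det_fin_two_of]; ring_nf; linear_combination hxy
      have hPu : IsUnit P.det := hPdet ▸ isUnit_one
      have hB'0 : (P * Bf j) 0 0 = 1 := by
        rw [Matrix.mul_apply, Fin.sum_univ_two]
        simp [hPdef]
        linear_combination hxy
      have hB'1 : (P * Bf j) 1 0 = 0 := by
        rw [Matrix.mul_apply, Fin.sum_univ_two]
        simp [hPdef]
        ring
      have hcol : ∀ C : Matrix (Fin 2) (Fin 2) O, gcol (C * (P * Bf j)) = gcol C := by
        intro C
        have h0 : (C * (P * Bf j)) 0 0 = C 0 0 := by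
          rw [Matrix.mul_apply, Fin.sum_univ_two, hB'0, hB'1]; ring
        have h1' : (C * (P * Bf j)) 1 0 = C 1 0 := by
          rw [Matrix.mul_apply, Fin.sum_univ_two, hB'0, hB'1]; ring
        rw [gcol, gcol, h0, h1']
      have hg : ∀ i, gcol (Af i * Bf j) = gcol (Af i * P⁻¹) := by
        intro i
        have e : Af i * Bf j = (Af i * P⁻¹) * (P * Bf j) := by
          rw [mul_assoc, ← mul_assoc P⁻¹, Matrix.nonsing_inv_mul P hPu, one_mul]
        rw [e, hcol]
      have hmem : ∀ i, ∃ i', Af i * P⁻¹ ∈ rightCoset' (Af i') := by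
        intro i
        have h2 : Af i ∈ doubleCoset' A := by
          rw [hAcov]; exact Set.mem_iUnion.mpr ⟨i, mem_self _⟩
        obtain ⟨R, S, hR, hS, hRS⟩ := h2
        have h3 : Af i * P⁻¹ ∈ doubleCoset' A :=
          ⟨R, S * P⁻¹, hR,
            by rw [Matrix.det_mul]; exact hS.mul (Matrix.isUnit_nonsing_inv_det P hPu),
            by rw [hRS]; simp [mul_assoc]⟩
        rw [hAcov] at h3
        exact Set.mem_iUnion.mp h3
      choose σ hσ using hmem
      have hσg : ∀ i, gcol (Af i * P⁻¹) = gcol (Af (σ i)) := by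
        intro i
        obtain ⟨Q, hQ, hQe⟩ := hσ i
        rw [hQe, gcol_unit_mul hQ]
      have hσinj : Function.Injective σ := by
        intro i i' h
        by_contra hne
        have e1 := coset_eq (hσ i)
        have e2 := coset_eq (hσ i')
        have hm : Af i * P⁻¹ ∈ rightCoset' (Af i' * P⁻¹) := by
          rw [e2, ← h, ← e1]; exact mem_self _
        obtain ⟨Q, hQ, hQe⟩ := hm
        have he : Af i = Q * Af i' := by
          have := congrArg (fun X => X * P) hQe
          simpa [mul_assoc, Matrix.nonsing_inv_mul P hPu] using this
        have hmem2 : Af i ∈ rightCoset' (Af i) ∩ rightCoset' (Af i') :=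
          ⟨mem_self _, ⟨Q, hQ, he⟩⟩
        rw [hAdis i i' hne] at hmem2
        exact hmem2
      have hσbij : Function.Bijective σ := Finite.injective_iff_bijective.mp hσinj
      have e : {i : Fin k // gcol (Af i * Bf j) = ⊤} ≃ {i : Fin k // gcol (Af i) = ⊤} :=
        Equiv.subtypeEquiv (Equiv.ofBijective σ hσbij) (fun i => by
          rw [hg i, hσg i]; exact Iff.rfl)
      exact Nat.card_congr e
    · rw [if_neg hj]
      have : IsEmpty {i : Fin k // gcol (Af i * Bf j) = ⊤} := by
        rw [isEmpty_subtype]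
        intro i h
        exact hj (top_unique (h ▸ gcol_mul_le (Af i) (Bf j)))
      exact Nat.card_of_isEmpty
  -- split the pair count as a sigma over j
  have e2 : {p : Fin k × Fin m // gcol (Af p.1 * Bf p.2) = ⊤} ≃
      Σ j : Fin m, {i : Fin k // gcol (Af i * Bf j) = ⊤} :=
    { toFun := fun x => ⟨x.1.2, x.1.1, x.2⟩
      invFun := fun x => ⟨(x.2.1, x.1), x.2.2⟩
      left_inv := fun x => by rcases x with ⟨⟨i, j⟩, h⟩; rfl
      right_inv := fun x => by rcases x with ⟨j, i, h⟩; rfl }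
  rw [Nat.card_congr e2, Nat.card_eq_fintype_card, Fintype.card_sigma]
  simp_rw [← Nat.card_eq_fintype_card, key]
  rw [mu_eq A k Af hAcov hAdis, mu_eq B m Bf hBcov hBdis, ← Finset.sum_filter,
    Finset.sum_const, smul_eq_mul, Nat.card_eq_fintype_card, Fintype.card_subtype, mul_comm]
  congr 1
  rw [Nat.card_eq_fintype_card, Fintype.card_subtype]
end

section
/- Let A ∈ I with δ₁(A) = 𝒪. Then μ_𝒪(A) = N(δ₂(A)), i.e. the number of right cosets U·B contained in U A U with 𝔤(B) = 𝒪 equals the norm of the ideal generated by det A. -/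
open Matrix

/-!
A coset `U·B` whose first column `(a, c)` is unimodular, say `x a + y c = 1`, contains
`!![x, y; -c, a] * B = !![1, β; 0, det B]`, and the cosets of `!![1, b; 0, d]` and
`!![1, b'; 0, d]` coincide exactly when `b ≡ b' mod d`. So `μ_𝒪(A) = N(det A)` once every
`!![1, b; 0, det A]` lies in `U A U`. For this it is enough that `A Q` has a unimodular first
column for some `Q ∈ U`; `Q = !![t, 1; 1, 0]` does, for a `t` found by the Chinese remainder
theorem at the finitely many primes dividing `det A`, using `δ₁(A) = 𝒪`.
-/

section Cosets

variable {O : Type*} [CommRing O]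

lemma mem_rightCoset'_self (B : Matrix (Fin 2) (Fin 2) O) : B ∈ rightCoset' B :=
  ⟨1, by simp, by simp⟩

lemma rightCoset'_mul_left {P : Matrix (Fin 2) (Fin 2) O} (hP : IsUnit P.det)
    (B : Matrix (Fin 2) (Fin 2) O) : rightCoset' (P * B) = rightCoset' B := by
  ext X
  constructor
  · rintro ⟨Q, hQ, rfl⟩
    exact ⟨Q * P, by rw [det_mul]; exact hQ.mul hP, (Matrix.mul_assoc _ _ _).symm⟩
  · rintro ⟨Q, hQ, rfl⟩
    refine ⟨Q * P⁻¹, by rw [det_mul]; exact hQ.mul (isUnit_nonsing_inv_det P hP), ?_⟩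
    rw [Matrix.mul_assoc, ← Matrix.mul_assoc P⁻¹, nonsing_inv_mul P hP, Matrix.one_mul]

lemma rightCoset'_subset_doubleCoset' {A B : Matrix (Fin 2) (Fin 2) O}
    (hB : B ∈ doubleCoset' A) : rightCoset' B ⊆ doubleCoset' A := by
  obtain ⟨P, Q, hP, hQ, rfl⟩ := hB
  rintro X ⟨R, hR, rfl⟩
  exact ⟨R * P, Q, by rw [det_mul]; exact hR.mul hP, hQ, by simp only [Matrix.mul_assoc]⟩

lemma mul_mem_doubleCoset' {A B Q : Matrix (Fin 2) (Fin 2) O} (hB : B ∈ doubleCoset' A)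
    (hQ : IsUnit Q.det) : B * Q ∈ doubleCoset' A := by
  obtain ⟨P, Q', hP, hQ', rfl⟩ := hB
  exact ⟨P, Q' * Q, hP, by rw [det_mul]; exact hQ'.mul hQ, by simp only [Matrix.mul_assoc]⟩

lemma associated_det_of_mem_doubleCoset' {A B : Matrix (Fin 2) (Fin 2) O}
    (hB : B ∈ doubleCoset' A) : Associated A.det B.det := by
  obtain ⟨P, Q, hP, hQ, rfl⟩ := hB
  exact ⟨hP.unit * hQ.unit, by simp only [det_mul, Units.val_mul, IsUnit.unit_spec]; ring⟩

lemma gcol_triangular (b d : O) : gcol !![1, b; 0, d] = ⊤ :=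
  (Ideal.eq_top_iff_one _).2 (Ideal.subset_span (by simp))

lemma rightCoset'_triangular_eq_of_associated {d d' : O} (h : Associated d d') (b : O) :
    rightCoset' !![1, b; 0, d] = rightCoset' !![1, b; 0, d'] := by
  obtain ⟨u, rfl⟩ := h
  have hP : IsUnit !![1, 0; 0, (u : O)].det := by simp [det_fin_two_of]
  have hPT : !![1, 0; 0, (u : O)] * !![1, b; 0, d] = !![1, b; 0, d * u] := by simp [mul_comm]
  rw [← hPT, rightCoset'_mul_left hP]

lemma rightCoset'_triangular_eq_iff {b b' d : O} :
    rightCoset' !![1, b; 0, d] = rightCoset' !![1, b'; 0, d] ↔ b - b' ∈ Ideal.span {d} := by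
  rw [Ideal.mem_span_singleton']
  constructor
  · intro h
    obtain ⟨R, -, hR⟩ : !![1, b; 0, d] ∈ rightCoset' !![1, b'; 0, d] :=
      h ▸ mem_rightCoset'_self _
    rw [eta_fin_two R, mul_fin_two] at hR
    have h00 : 1 = R 0 0 * 1 + R 0 1 * 0 := congrFun (congrFun hR 0) 0
    have h01 : b = R 0 0 * b' + R 0 1 * d := congrFun (congrFun hR 0) 1
    exact ⟨R 0 1, by linear_combination b' * h00 - h01⟩
  · rintro ⟨q, hq⟩
    have hP : IsUnit !![1, q; 0, 1].det := by simp [det_fin_two_of]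
    have hPT : !![1, q; 0, 1] * !![1, b'; 0, d] = !![1, b; 0, d] := by
      simp [hq]
    rw [← hPT, rightCoset'_mul_left hP]

lemma exists_rightCoset'_eq_triangular {B : Matrix (Fin 2) (Fin 2) O} (h : gcol B = ⊤) :
    ∃ β : O, rightCoset' B = rightCoset' !![1, β; 0, B.det] := by
  obtain ⟨a, b, c, d, rfl⟩ : ∃ a b c d, B = !![a, b; c, d] := ⟨_, _, _, _, eta_fin_two B⟩
  change Ideal.span {a, c} = ⊤ at h
  obtain ⟨x, y, hxy⟩ := Ideal.mem_span_pair.mp ((Ideal.eq_top_iff_one _).1 h)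
  have hP : IsUnit !![x, y; -c, a].det := by
    rw [det_fin_two_of, show x * a - y * -c = 1 by linear_combination hxy]
    exact isUnit_one
  have hPB : !![x, y; -c, a] * !![a, b; c, d] = !![1, x * b + y * d; 0, a * d - b * c] := by
    rw [mul_fin_two, hxy, show -c * a + a * c = 0 by ring,
      show -c * b + a * d = a * d - b * c by ring]
  exact ⟨_, by rw [det_fin_two_of, ← hPB, rightCoset'_mul_left hP]⟩

lemma exists_rightCoset'_eq_triangular_of_mem_doubleCoset' {A B : Matrix (Fin 2) (Fin 2) O}
    (hB : B ∈ doubleCoset' A) (h : gcol B = ⊤) :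
    ∃ β : O, rightCoset' B = rightCoset' !![1, β; 0, A.det] := by
  obtain ⟨β, hβ⟩ := exists_rightCoset'_eq_triangular h
  exact ⟨β, hβ.trans (rightCoset'_triangular_eq_of_associated
    (associated_det_of_mem_doubleCoset' hB).symm β)⟩

/-- Right multiplication by `!![1, s; 0, 1]` shifts the upper right entry by `s`. -/
lemma triangular_mem_doubleCoset' {A Q : Matrix (Fin 2) (Fin 2) O} (hQ : IsUnit Q.det)
    (hAQ : gcol (A * Q) = ⊤) (b : O) : !![1, b; 0, A.det] ∈ doubleCoset' A := by
  have hB : A * Q ∈ doubleCoset' A := ⟨1, Q, by simp, hQ, by simp⟩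
  obtain ⟨β, hβ⟩ := exists_rightCoset'_eq_triangular_of_mem_doubleCoset' hB hAQ
  have hβA : !![1, β; 0, A.det] ∈ doubleCoset' A :=
    rightCoset'_subset_doubleCoset' hB (hβ ▸ mem_rightCoset'_self _)
  have hS : IsUnit !![(1 : O), b - β; 0, 1].det := by simp [det_fin_two_of]
  convert mul_mem_doubleCoset' hβA hS using 1
  simp

lemma exists_rightCoset'_gcol_eq_top_iff {A : Matrix (Fin 2) (Fin 2) O}
    (htri : ∀ b : O, !![1, b; 0, A.det] ∈ doubleCoset' A) (S : Set (Matrix (Fin 2) (Fin 2) O)) :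
    (∃ B, S = rightCoset' B ∧ S ⊆ doubleCoset' A ∧ gcol B = ⊤) ↔
      S ∈ Set.range fun b : O => rightCoset' !![1, b; 0, A.det] := by
  constructor
  · rintro ⟨B, rfl, hsub, hB⟩
    obtain ⟨β, hβ⟩ :=
      exists_rightCoset'_eq_triangular_of_mem_doubleCoset' (hsub (mem_rightCoset'_self B)) hB
    exact ⟨β, hβ.symm⟩
  · rintro ⟨b, rfl⟩
    exact ⟨_, rfl, rightCoset'_subset_doubleCoset' (htri b), gcol_triangular b A.det⟩

end Cosets

section UnimodularColumn

variable {O : Type*} [CommRing O]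

lemma exists_not_mul_add_mem_and_mul_add_mem {𝔭 : Ideal O} {a b c d : O}
    (h : ¬(a ∈ 𝔭 ∧ b ∈ 𝔭 ∧ c ∈ 𝔭 ∧ d ∈ 𝔭)) :
    ∃ r : O, ¬(a * r + b ∈ 𝔭 ∧ c * r + d ∈ 𝔭) := by
  by_cases hbd : b ∈ 𝔭 ∧ d ∈ 𝔭
  · refine ⟨1, fun ⟨hab, hcd⟩ => h ⟨?_, hbd.1, ?_, hbd.2⟩⟩
    · simpa using 𝔭.sub_mem hab hbd.1
    · simpa using 𝔭.sub_mem hcd hbd.2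
  · exact ⟨0, by simpa using hbd⟩

/-- Every maximal ideal containing `a t + b` and `c t + d` contains `a d - b c`, so it suffices
to choose `t` correctly modulo the finitely many maximal ideals containing `a d - b c`. -/
lemma exists_span_mul_add_pair_eq_top {a b c d : O}
    (hfin : {𝔭 : Ideal O | 𝔭.IsMaximal ∧ a * d - b * c ∈ 𝔭}.Finite)
    (h : Ideal.span {a, b, c, d} = ⊤) :
    ∃ t : O, Ideal.span {a * t + b, c * t + d} = ⊤ := by
  set ι := {𝔭 : Ideal O | 𝔭.IsMaximal ∧ a * d - b * c ∈ 𝔭}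
  have : Finite ι := hfin.to_subtype
  have hgood (𝔭 : ι) : ∃ r : O, ¬(a * r + b ∈ 𝔭.1 ∧ c * r + d ∈ 𝔭.1) := by
    refine exists_not_mul_add_mem_and_mul_add_mem fun habcd => 𝔭.2.1.ne_top ?_
    rw [eq_top_iff, ← h, Ideal.span_le]
    simp [Set.insert_subset_iff, habcd]
  choose r hr using hgood
  have hcop : Pairwise (Function.onFun IsCoprime fun 𝔭 : ι => 𝔭.1) := fun 𝔭 𝔮 hne =>
    Ideal.isCoprime_iff_sup_eq.2 (𝔭.2.1.coprime_of_ne 𝔮.2.1 (Subtype.coe_injective.ne hne))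
  obtain ⟨t, ht⟩ := Ideal.exists_forall_sub_mem_ideal hcop r
  refine ⟨t, by_contra fun hne => ?_⟩
  obtain ⟨𝔪, h𝔪, hle⟩ := Ideal.exists_le_maximal _ hne
  have hα : a * t + b ∈ 𝔪 := hle (Ideal.subset_span (by simp))
  have hγ : c * t + d ∈ 𝔪 := hle (Ideal.subset_span (by simp))
  have hdet : a * d - b * c ∈ 𝔪 := by
    convert 𝔪.sub_mem (𝔪.mul_mem_left a hγ) (𝔪.mul_mem_left c hα) using 1
    ring
  let 𝔭 : ι := ⟨𝔪, h𝔪, hdet⟩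
  have hsub : t - r 𝔭 ∈ 𝔪 := ht 𝔭
  refine hr 𝔭 ⟨?_, ?_⟩
  · convert 𝔪.sub_mem hα (𝔪.mul_mem_left a hsub) using 1
    ring
  · convert 𝔪.sub_mem hγ (𝔪.mul_mem_left c hsub) using 1
    ring

lemma IsDedekindDomain.finite_setOf_isMaximal_mem [IsDedekindDomain O] {x : O} (hx : x ≠ 0) :
    {𝔭 : Ideal O | 𝔭.IsMaximal ∧ x ∈ 𝔭}.Finite := by
  have hI : Ideal.span {x} ≠ 0 := by simpa using hx
  refine ((Ideal.finite_factors hI).image HeightOneSpectrum.asIdeal).subset ?_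
  rintro 𝔭 ⟨h𝔭, hx𝔭⟩
  have hne : 𝔭 ≠ ⊥ := fun h => hx (by simpa [h] using hx𝔭)
  exact ⟨⟨𝔭, h𝔭.isPrime, hne⟩,
    Ideal.dvd_iff_le.2 ((Ideal.span_singleton_le_iff_mem _).2 hx𝔭), rfl⟩

lemma exists_isUnit_det_gcol_mul_eq_top [IsDedekindDomain O] {A : Matrix (Fin 2) (Fin 2) O}
    (hA : A.det ≠ 0) (h1 : delta1 A = ⊤) :
    ∃ Q : Matrix (Fin 2) (Fin 2) O, IsUnit Q.det ∧ gcol (A * Q) = ⊤ := by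
  obtain ⟨t, ht⟩ := exists_span_mul_add_pair_eq_top
    (by simpa [det_fin_two] using IsDedekindDomain.finite_setOf_isMaximal_mem hA) h1
  refine ⟨!![t, 1; 1, 0], by simp [det_fin_two_of], ?_⟩
  rw [eta_fin_two A, mul_fin_two, gcol]
  simpa using ht

end UnimodularColumn

lemma Submodule.card_range_eq_card_quotient {R M X : Type*} [Ring R] [AddCommGroup M]
    [Module R M] {p : Submodule R M} {f : M → X} (hf : ∀ a b, f a = f b ↔ a - b ∈ p) :
    Nat.card (Set.range f) = Nat.card (M ⧸ p) :=
  Nat.card_congr <| (Setoid.quotientKerEquivRange f).symm.trans <|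
    Quotient.congrRight fun a b => (hf a b).trans (quotientRel_def p).symm

theorem stmt16_general {O : Type*} [CommRing O] [IsDedekindDomain O]
    (A : Matrix (Fin 2) (Fin 2) O) (hA : A.det ≠ 0)
    (h1 : delta1 A = ⊤) :
    muIdeal A ⊤ = Nat.card (O ⧸ delta2 A) := by
  obtain ⟨Q, hQ, hAQ⟩ := exists_isUnit_det_gcol_mul_eq_top hA h1
  have htri := triangular_mem_doubleCoset' hQ hAQ
  rw [muIdeal, delta2, ← Submodule.card_range_eq_card_quotient fun b b' => rightCoset'_triangular_eq_iff]
  exact Nat.card_congr (Equiv.subtypeEquivRight (exists_rightCoset'_gcol_eq_top_iff htri))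

theorem stmt16 {O : Type*} [CommRing O] [IsDomain O] [IsDedekindDomain O]
    -- `𝒪` is norm-finite:
    (hnf : ∀ x : O, x ≠ 0 → Finite (O ⧸ Ideal.span {x}))
    (A : Matrix (Fin 2) (Fin 2) O) (hA : A.det ≠ 0)
    (h1 : delta1 A = ⊤) :
    muIdeal A ⊤ = Nat.card (O ⧸ delta2 A) :=
  stmt16_general A hA h1
end

section
/- For every A ∈ I, the double coset U A U is the union of finitely many right cosets with respect to U; that is, the set {U·B : B ∈ U A U} of right cosets of U contained in U A U is finite. -/
open Matrix

lemma rightCoset'_eq_of_unit {O : Type*} [CommRing O] {B B' Q : Matrix (Fin 2) (Fin 2) O}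
    (hQ : IsUnit Q.det) (h : B = Q * B') : rightCoset' B = rightCoset' B' := by
  ext X
  constructor
  · rintro ⟨P, hP, rfl⟩
    exact ⟨P * Q, by simpa [Matrix.det_mul] using hP.mul hQ, by rw [h, mul_assoc]⟩
  · rintro ⟨P, hP, rfl⟩
    refine ⟨P * Q⁻¹, ?_, ?_⟩
    · rw [Matrix.det_mul]
      exact hP.mul (Matrix.isUnit_nonsing_inv_det _ hQ)
    · rw [h, ← mul_assoc, mul_assoc P, Matrix.nonsing_inv_mul _ hQ, mul_one]

theorem stmt17 {O : Type*} [CommRing O] [IsDomain O] [IsDedekindDomain O]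
    -- `𝒪` is norm-finite:
    (hnf : ∀ x : O, x ≠ 0 → Finite (O ⧸ Ideal.span {x}))
    (A : Matrix (Fin 2) (Fin 2) O) (hA : A.det ≠ 0) :
    {S : Set (Matrix (Fin 2) (Fin 2) O) | ∃ B ∈ doubleCoset' A, S = rightCoset' B}.Finite := by
  classical
  set d : O := A.det with hd
  have hfin : Finite (O ⧸ Ideal.span {d}) := hnf _ hA
  set R := O ⧸ Ideal.span {d}
  let π : O → R := Ideal.Quotient.mk _
  let f : Set (Matrix (Fin 2) (Fin 2) O) → Set (Matrix (Fin 2) (Fin 2) R) :=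
    fun S => (fun M => M.map π) '' S
  refine Set.Finite.of_finite_image (f := f) (Set.toFinite _) ?_
  rintro S ⟨B, ⟨P, Q, hP, hQ, rfl⟩, rfl⟩ S' ⟨B', ⟨P', Q', hP', hQ', rfl⟩, rfl⟩ hff
  set B := P * A * Q with hB
  set B' := P' * A * Q' with hB'
  have hBmem : (B.map π) ∈ f (rightCoset' B) :=
    ⟨B, ⟨1, by simp, by simp⟩, rfl⟩
  rw [hff] at hBmem
  obtain ⟨X, ⟨P₀, hP₀, rfl⟩, hmap⟩ := hBmem
  -- entries of B - P₀ * B' are divisible by d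
  have hdvd : ∀ i j, d ∣ (B i j - (P₀ * B') i j) := by
    intro i j
    have h1 : π ((P₀ * B') i j) = π (B i j) := congrFun (congrFun hmap i) j
    rw [Ideal.Quotient.mk_eq_mk_iff_sub_mem, Ideal.mem_span_singleton] at h1
    rw [← neg_sub]
    exact dvd_neg.mpr h1
  -- the quotient matrix M with B = P₀ * B' + d • M
  let M : Matrix (Fin 2) (Fin 2) O := fun i j => (hdvd i j).choose
  have hM : B = P₀ * B' + d • M := by
    ext i j
    have := (hdvd i j).choose_spec
    simp only [Matrix.add_apply, Matrix.smul_apply, smul_eq_mul]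
    rw [← this]
    ring
  -- det B' is a unit times d
  have hw : IsUnit (P'.det * Q'.det) := hP'.mul hQ'
  have hdetB' : B'.det = (P'.det * Q'.det) * d := by
    rw [hB', Matrix.det_mul, Matrix.det_mul]; ring
  have hdetB : B.det = (P.det * Q.det) * d := by
    rw [hB, Matrix.det_mul, Matrix.det_mul]; ring
  set w : Oˣ := hw.unit with hwdef
  -- d • M = N * B'
  let N : Matrix (Fin 2) (Fin 2) O := (w⁻¹ : Oˣ) • (M * B'.adjugate)
  have hN : d • M = N * B' := by
    have : N * B' = (w⁻¹ : Oˣ) • (M * (B'.adjugate * B')) := by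
      simp only [N, Matrix.smul_mul, mul_assoc]
    rw [this, Matrix.adjugate_mul, hdetB', Matrix.mul_smul, mul_one, Units.smul_def, smul_smul]
    have hwc : (w : O) = P'.det * Q'.det := hw.unit_spec
    congr 1
    rw [← hwc, ← mul_assoc, Units.inv_mul, one_mul]
  set Q₀ : Matrix (Fin 2) (Fin 2) O := P₀ + N with hQ₀
  have hBQ : B = Q₀ * B' := by
    rw [hQ₀, Matrix.add_mul, ← hN, hM]
  -- Q₀ has unit determinant
  have hdet : Q₀.det * B'.det = B.det := by rw [hBQ]; exact (Matrix.det_mul _ _).symm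
  have hunit : IsUnit Q₀.det := by
    have h1 : Q₀.det * ((P'.det * Q'.det) * d) = (P.det * Q.det) * d := by
      rw [← hdetB', ← hdetB]; exact hdet
    have h2 : (Q₀.det * (P'.det * Q'.det)) * d = (P.det * Q.det) * d := by
      rw [← h1]; ring
    have h3 : Q₀.det * (P'.det * Q'.det) = P.det * Q.det :=
      mul_right_cancel₀ hA h2
    have h4 : IsUnit (Q₀.det * (P'.det * Q'.det)) := h3 ▸ hP.mul hQ
    exact isUnit_of_mul_isUnit_left h4
  exact rightCoset'_eq_of_unit hunit hBQ
end
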